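/- arXiv:1907.07711 — 7 statements merged into one kernel-verified Lean document; each statement's English description precedes it below -/
import Mathlib

section
/- Let (A, +, ·) be a finite radical ring with A³ = 0 and circle operation a ∘ b = a + b + a·b. A subgroup J of (A, ∘) that is also closed under addition satisfies the +-stability condition — for all g ∈ A and h ∈ J there exists h' ∈ J with g + h = h' ∘ g — if and only if J is a right ideal of the ring A. -/
/-- Let `A` be a finite radical ring with `A³ = 0` and circle operation
`a ∘ b = a + b + a·b`. A subgroup `J` of `(A,∘)` that is also closed under addition is
+-stable (for all `g ∈ A`, `h ∈ J` there is `h' ∈ J` with `g + h = h' ∘ g`) if and only if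
`J` is a right ideal of the ring `A`. -/
theorem stmt2 (A : Type*) [NonUnitalRing A] [Fintype A]
    (hA3 : ∀ x y z : A, x * y * z = 0)
    (circ : A → A → A) (hcirc : ∀ a b : A, circ a b = a + b + a * b)
    (J : Set A)
    (hJ0 : (0 : A) ∈ J)
    (hJcirc : ∀ x ∈ J, ∀ y ∈ J, circ x y ∈ J)
    (hJcircinv : ∀ x ∈ J, ∃ y ∈ J, circ x y = 0 ∧ circ y x = 0)
    (hJadd : ∀ x ∈ J, ∀ y ∈ J, x + y ∈ J) :
    (∀ g : A, ∀ h ∈ J, ∃ h' ∈ J, g + h = circ h' g) ↔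
    (∀ h ∈ J, ∀ g : A, h * g ∈ J) := by
  constructor
  · intro hs h hJ g
    obtain ⟨h', hh'J, heq⟩ := hs g h hJ
    rw [hcirc] at heq
    have hh : h = h' + h' * g := by
      have h0 : g + h = g + (h' + h' * g) := by rw [heq]; abel
      exact add_left_cancel h0
    obtain ⟨y, hyJ, _, hyinv⟩ := hJcircinv h' hh'J
    rw [hcirc] at hyinv
    have key : circ y h = h * g := by
      rw [hcirc]
      have h1 : y * (h' * g) = 0 := by rw [← mul_assoc]; exact hA3 y h' g
      have h2 : h' * g * g = 0 := hA3 h' g g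
      have h3 : y * h = y * h' + y * (h' * g) := by rw [hh, mul_add]
      have h4 : h * g = h' * g + h' * g * g := by rw [hh, add_mul]
      rw [h3, h1, add_zero, h4, h2, add_zero, hh]
      have h5 : y + (h' + h' * g) + y * h' = (y + h' + y * h') + h' * g := by abel
      rw [h5, hyinv, zero_add]
    rw [← key]
    exact hJcirc y hyJ h hJ
  · intro hri g h hJ
    have hhg : h * g ∈ J := hri h hJ g
    obtain ⟨y, hyJ, _, hyinv⟩ := hJcircinv (h * g) hhg
    rw [hcirc] at hyinv
    have h1 : y * (h * g) = 0 := by rw [← mul_assoc]; exact hA3 y h g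
    rw [h1, add_zero] at hyinv
    have hy : y = -(h * g) := eq_neg_of_add_eq_zero_left hyinv
    refine ⟨h + y, hJadd h hJ y hyJ, ?_⟩
    rw [hcirc, hy]
    have h2 : (h + -(h * g)) * g = h * g + -(h * g * g) := by rw [add_mul, neg_mul]
    rw [h2, hA3]
    abel
end

section
/- Let A be the 4-dimensional F_p-algebra (p > 2 prime) with basis a, b, c, d, multiplication given by a² = c, ab = d, and all other basis products zero. The number of right ideals of A (including 0 and A) is 2p² + 3p + 5. -/
/-- Multiplication of the 4-dimensional `F_p`-algebra `A⁰_{4,21}` with basis `a,b,c,d`,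
`a² = c`, `ab = d`, all other basis products zero; an element `ra+sb+tc+ud` is the
quadruple `(r,s,t,u)`. -/
def mulA {p : ℕ} (x y : ZMod p × ZMod p × ZMod p × ZMod p) :
    ZMod p × ZMod p × ZMod p × ZMod p :=
  (0, 0, x.1 * y.1, x.1 * y.2.1)

/-!
Since `x·y = x_a (y_a c + y_b d)`, the products `J·A` span `0` if `J ⊆ ⟨b, c, d⟩` and
`⟨c, d⟩` otherwise. So the right ideals are the subspaces of `W = ⟨b, c, d⟩` together with the
subspaces containing `N = ⟨c, d⟩`, and these two families share only `N` and `W`.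
Over `F_q`, a space of dimension 3 has `2q² + 2q + 4` subspaces (lines and planes are both
counted by the projective plane, planes via duality) and `A/N`, of dimension 2, has `q + 3`;
hence `(2p² + 2p + 4) + (p + 3) - 2` right ideals.
-/

open Module Finset

instance {R M : Type*} [Semiring R] [AddCommMonoid M] [Module R M] [Finite M] :
    Finite (Submodule R M) :=
  Finite.of_injective _ SetLike.coe_injective

section CountingSubspaces

variable {K V : Type*} [Field K] [AddCommGroup V] [Module K V]

theorem card_submodule_eq_sum_card_finrank [Finite K] [FiniteDimensional K V] :
    Nat.card (Submodule K V) =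
      ∑ k ∈ range (finrank K V + 1), Nat.card {U : Submodule K V // finrank K U = k} := by
  have : Finite V := Module.finite_of_finite K
  have := Fintype.ofFinite (Submodule K V)
  rw [Nat.card_eq_fintype_card, ← Finset.card_univ,
    card_eq_sum_card_fiberwise (f := fun U : Submodule K V => finrank K U)
      (t := range (finrank K V + 1))
      (fun U _ => mem_range.2 (Nat.lt_succ_of_le (Submodule.finrank_le U)))]
  refine sum_congr rfl fun k _ => ?_
  rw [Nat.card_eq_fintype_card, Fintype.card_subtype]

theorem card_finrank_eq_zero [FiniteDimensional K V] :
    Nat.card {U : Submodule K V // finrank K U = 0} = 1 := by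
  rw [Nat.card_eq_one_iff_exists]
  exact ⟨⟨⊥, finrank_bot K V⟩, fun U => Subtype.ext (Submodule.finrank_eq_zero.1 U.2)⟩

theorem card_finrank_eq_finrank [FiniteDimensional K V] :
    Nat.card {U : Submodule K V // finrank K U = finrank K V} = 1 := by
  rw [Nat.card_eq_one_iff_exists]
  exact ⟨⟨⊤, finrank_top K V⟩, fun U => Subtype.ext (Submodule.eq_top_of_finrank_eq U.2)⟩

theorem card_finrank_eq_one [Finite K] :
    Nat.card {U : Submodule K V // finrank K U = 1} =
      ∑ i ∈ range (finrank K V), Nat.card K ^ i := by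
  rw [← Nat.card_congr (Projectivization.equivSubmodule K V),
    Projectivization.card_of_finrank K V rfl]

theorem card_finrank_eq_of_finrank_eq_add_one [Finite K] [FiniteDimensional K V] {n : ℕ}
    (h : finrank K V = n + 1) :
    Nat.card {U : Submodule K V // finrank K U = n} = ∑ i ∈ range (n + 1), Nat.card K ^ i := by
  rw [← h, ← Subspace.dual_finrank_eq, ← card_finrank_eq_one]
  refine Nat.card_congr <|
    ((Subspace.orderIsoFiniteDimensional (K := K) (V := V)).toEquiv.trans
      OrderDual.ofDual).subtypeEquiv fun U => ?_
  have := U.finrank_add_finrank_dualAnnihilator_eq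
  change _ ↔ finrank K U.dualAnnihilator = 1
  omega

theorem card_submodule_of_finrank_eq_two [Finite K] (h : finrank K V = 2) :
    Nat.card (Submodule K V) = Nat.card K + 3 := by
  have : FiniteDimensional K V := .of_finrank_pos (by omega)
  rw [card_submodule_eq_sum_card_finrank, h]
  simp only [sum_range_succ, range_zero, sum_empty]
  rw [card_finrank_eq_zero, card_finrank_eq_one, ← h, card_finrank_eq_finrank, h]
  simp [sum_range_succ]
  ring

theorem card_submodule_of_finrank_eq_three [Finite K] (h : finrank K V = 3) :
    Nat.card (Submodule K V) = 2 * Nat.card K ^ 2 + 2 * Nat.card K + 4 := by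
  have : FiniteDimensional K V := .of_finrank_pos (by omega)
  rw [card_submodule_eq_sum_card_finrank, h]
  simp only [sum_range_succ, range_zero, sum_empty]
  rw [card_finrank_eq_zero, card_finrank_eq_one, card_finrank_eq_of_finrank_eq_add_one h, ← h,
    card_finrank_eq_finrank, h]
  simp [sum_range_succ]
  ring

theorem Submodule.Icc_eq_pair_of_finrank_eq_add_one [FiniteDimensional K V]
    {N W : Submodule K V} (hNW : N ≤ W) (h : finrank K W = finrank K N + 1) :
    Set.Icc N W = {N, W} := by
  ext J
  refine ⟨fun ⟨hNJ, hJW⟩ => ?_, ?_⟩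
  · have h₁ := Submodule.finrank_mono hNJ
    have h₂ := Submodule.finrank_mono hJW
    rcases (show finrank K J = finrank K N ∨ finrank K J = finrank K W by omega) with hJ | hJ
    · exact Or.inl (Submodule.eq_of_le_of_finrank_eq hNJ hJ.symm).symm
    · exact Or.inr (Submodule.eq_of_le_of_finrank_eq hJW hJ)
  · rintro (rfl | rfl)
    · exact ⟨le_rfl, hNW⟩
    · exact ⟨hNW, le_rfl⟩

theorem LinearMap.finrank_ker_add_finrank_of_surjective {V₂ : Type*} [AddCommGroup V₂]
    [Module K V₂] [FiniteDimensional K V] {f : V →ₗ[K] V₂} (hf : Function.Surjective f) :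
    finrank K (LinearMap.ker f) + finrank K V₂ = finrank K V := by
  have := f.finrank_range_add_finrank_ker
  rw [LinearMap.range_eq_top.2 hf, finrank_top] at this
  omega

end CountingSubspaces

theorem Submodule.ncard_Iic {R M : Type*} [Ring R] [AddCommGroup M] [Module R M]
    (W : Submodule R M) : (Set.Iic W).ncard = Nat.card (Submodule R W) :=
  Nat.card_congr (Submodule.MapSubtype.orderIso W).toEquiv.symm

theorem Submodule.ncard_Ici {R M : Type*} [Ring R] [AddCommGroup M] [Module R M]
    (N : Submodule R M) : (Set.Ici N).ncard = Nat.card (Submodule R (M ⧸ N)) :=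
  Nat.card_congr (Submodule.comapMkQRelIso N).toEquiv.symm

section AlgebraA

variable (p : ℕ) [Fact p.Prime]

local notation "A" => ZMod p × ZMod p × ZMod p × ZMod p

def coordAB : A →ₗ[ZMod p] ZMod p × ZMod p :=
  (LinearMap.fst _ _ _).prod ((LinearMap.fst _ _ _).comp (LinearMap.snd _ _ _))

def spanBCD : Submodule (ZMod p) A :=
  LinearMap.ker (LinearMap.fst _ _ _)

def spanCD : Submodule (ZMod p) A :=
  LinearMap.ker (coordAB p)

variable {p}

theorem mem_spanBCD {x : A} : x ∈ spanBCD p ↔ x.1 = 0 := Iff.rfl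

theorem mem_spanCD {x : A} : x ∈ spanCD p ↔ x.1 = 0 ∧ x.2.1 = 0 := by
  simp [spanCD, coordAB]

theorem coordAB_surjective : Function.Surjective (coordAB p) :=
  fun y => ⟨(y.1, y.2, 0, 0), rfl⟩

theorem finrank_spanBCD : finrank (ZMod p) (spanBCD p) = 3 := by
  have := LinearMap.finrank_ker_add_finrank_of_surjective
    (LinearMap.fst_surjective (R := ZMod p) (M := ZMod p) (M₂ := ZMod p × ZMod p × ZMod p))
  simp only [finrank_prod, finrank_self] at this
  rw [spanBCD]
  omega

theorem finrank_spanCD : finrank (ZMod p) (spanCD p) = 2 := by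
  have := LinearMap.finrank_ker_add_finrank_of_surjective (coordAB_surjective (p := p))
  simp only [finrank_prod, finrank_self] at this
  rw [spanCD]
  omega

theorem finrank_quotient_spanCD : finrank (ZMod p) (A ⧸ spanCD p) = 2 := by
  have := (spanCD p).finrank_quotient_add_finrank
  simp only [finrank_spanCD, finrank_prod, finrank_self] at this
  omega

theorem spanCD_le_spanBCD : spanCD p ≤ spanBCD p := fun _ hx => (mem_spanCD.1 hx).1

theorem isRightIdeal_iff (J : Submodule (ZMod p) A) :
    (∀ g x, x ∈ J → mulA x g ∈ J) ↔ J ≤ spanBCD p ∨ spanCD p ≤ J := by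
  refine ⟨fun hJ => or_iff_not_imp_left.2 fun hJW => ?_, ?_⟩
  · obtain ⟨x, hxJ, hx⟩ := Set.not_subset.1 hJW
    rw [SetLike.mem_coe, mem_spanBCD] at hx
    intro y hy
    obtain ⟨hy₁, hy₂⟩ := mem_spanCD.1 hy
    have : mulA x (x.1⁻¹ * y.2.2.1, x.1⁻¹ * y.2.2.2, 0, 0) = y := by
      simp [mulA, mul_inv_cancel_left₀ hx, Prod.ext_iff, hy₁, hy₂]
    exact this ▸ hJ _ x hxJ
  · rintro (hJ | hJ) g x hx
    · simp only [mulA, mem_spanBCD.1 (hJ hx), zero_mul]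
      exact J.zero_mem
    · exact hJ (by simp [mulA, mem_spanCD])

end AlgebraA

theorem stmt5_general (p : ℕ) [Fact p.Prime] :
    Nat.card {J : Submodule (ZMod p) (ZMod p × ZMod p × ZMod p × ZMod p) //
      ∀ g x, x ∈ J → mulA x g ∈ J} = 2 * p ^ 2 + 3 * p + 5 := by
  have hunion : {J | ∀ g x, x ∈ J → mulA x g ∈ J} = Set.Iic (spanBCD p) ∪ Set.Ici (spanCD p) :=
    Set.ext isRightIdeal_iff
  have hinter : Set.Iic (spanBCD p) ∩ Set.Ici (spanCD p) = {spanCD p, spanBCD p} := by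
    rw [Set.inter_comm, Set.Ici_inter_Iic, Submodule.Icc_eq_pair_of_finrank_eq_add_one
      spanCD_le_spanBCD (by rw [finrank_spanBCD, finrank_spanCD])]
  have hne : spanCD p ≠ spanBCD p :=
    ne_of_apply_ne (fun U : Submodule (ZMod p) _ => finrank (ZMod p) U)
      (by simp only [finrank_spanBCD, finrank_spanCD]; decide)
  have hW := card_submodule_of_finrank_eq_three (finrank_spanBCD (p := p))
  have hAN := card_submodule_of_finrank_eq_two (finrank_quotient_spanCD (p := p))
  have := Set.ncard_union_add_ncard_inter (Set.Iic (spanBCD p)) (Set.Ici (spanCD p))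
  rw [hinter, Set.ncard_pair hne, Submodule.ncard_Iic, Submodule.ncard_Ici, hW, hAN,
    Nat.card_zmod, ← hunion, ← Nat.card_coe_set_eq, Set.coe_ofPred] at this
  omega

/-- The number of right ideals of `A` (`F_p`-subspaces `J` with `J·A ⊆ J`),
including `0` and `A`, is `p² + 3p + 5`. -/
theorem stmt5 (p : ℕ) [Fact p.Prime] (hp2 : 2 < p) :
    Nat.card {J : Submodule (ZMod p) (ZMod p × ZMod p × ZMod p × ZMod p) //
      ∀ g x, x ∈ J → mulA x g ∈ J} = 2 * p ^ 2 + 3 * p + 5 :=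
  stmt5_general p
end

section
/- Let G be a finite group that is an internal Zappa–Szép product G = G_L · G_R (that is, G_L, G_R are subgroups with G_L ∩ G_R = {e} and every element g of G factors uniquely as g = g_L · g_R^{-1}). Define a second operation ∘ on G by (g_L g_R^{-1}) ∘ h = g_L · h · g_R^{-1}. Then a subgroup G' of G (under ·) is ∘-stable — i.e., for all x ∈ G' and g ∈ G, (g ∘ x)·g^{-1} ∈ G' — if and only if G' is normalized by G_L. -/
/-- Let `G = G_L · G_R` be an internal Zappa–Szép product, with every `g ∈ G`
factoring uniquely as `g = fL g * (fR g)⁻¹` with `fL g ∈ G_L`, `fR g ∈ G_R`.  With the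
second operation `(g_L g_R⁻¹) ∘ h = g_L · h · g_R⁻¹`, a subgroup `G'` of `(G,·)` is
∘-stable (`(g ∘ x)·g⁻¹ ∈ G'` for all `x ∈ G'`, `g ∈ G`) iff `G'` is normalized by `G_L`. -/
theorem stmt7 (G : Type*) [Group G] [Fintype G] (Gl Gr : Subgroup G)
    (hinter : Gl ⊓ Gr = ⊥)
    (hcard : Nat.card Gl * Nat.card Gr = Nat.card G)
    (fL fR : G → G)
    (hfL : ∀ g, fL g ∈ Gl) (hfR : ∀ g, fR g ∈ Gr)
    (hfac : ∀ g : G, g = fL g * (fR g)⁻¹)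
    (G' : Subgroup G) :
    (∀ x ∈ G', ∀ g : G, (fL g * x * (fR g)⁻¹) * g⁻¹ ∈ G') ↔
    (∀ l ∈ Gl, ∀ x ∈ G', l * x * l⁻¹ ∈ G') := by
  constructor
  · intro h l hl x hx
    have hmem : (fR l)⁻¹ ∈ Gl ⊓ Gr := by
      rw [Subgroup.mem_inf]
      refine ⟨?_, inv_mem (hfR l)⟩
      have heq : (fR l)⁻¹ = (fL l)⁻¹ * l := by
        nth_rewrite 3 [hfac l]
        group
      rw [heq]
      exact mul_mem (inv_mem (hfL l)) hl
    have h1 : fR l = 1 := by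
      rw [hinter, Subgroup.mem_bot] at hmem
      simpa using hmem
    have h2 : fL l = l := by
      have := hfac l
      rw [h1] at this
      simpa using this.symm
    have := h x hx l
    rw [h1, h2] at this
    simpa using this
  · intro h x hx g
    have key : (fL g * x * (fR g)⁻¹) * g⁻¹ = fL g * x * (fL g)⁻¹ := by
      nth_rewrite 3 [hfac g]
      group
    rw [key]
    exact h (fL g) (hfL g) x hx
end

section
/- Let G = G_L ⋊ G_R be a semidirect product of finite groups (G_L normal, G_R acting by conjugation), with group operation denoted ·. Define ∘ on G by (g_L g_R^{-1}) ∘ h = g_L h g_R^{-1}, where g = g_L g_R^{-1} is the unique factorization. Then (G, ∘, ·) is a bi-skew brace: both (G, ∘, ·) and (G, ·, ∘) are skew left braces; i.e., both compatibility conditions a ∘ (b · c) = (a ∘ b) · a^{-1} · (a ∘ c) and a · (b ∘ c) = (a · b) ∘ ā ∘ (a · c) hold for all a, b, c (where a^{-1} is the ·-inverse and ā the ∘-inverse of a). -/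
open SemidirectProduct

/-- The direct-product operation `∘` on the semidirect product `G = G_L ⋊ G_R`: an element
`g` factors uniquely as `g = g_L · g_R⁻¹` with `g_L = inl g.left` and `g_R⁻¹ = inr g.right`,
and `g ∘ h = g_L · h · g_R⁻¹`. -/
def circSD {N H : Type*} [Group N] [Group H] {φ : H →* MulAut N}
    (g h : N ⋊[φ] H) : N ⋊[φ] H :=
  inl g.left * h * inr g.right

/-- The `∘`-inverse of an element of the semidirect product. -/
def cinvSD {N H : Type*} [Group N] [Group H] {φ : H →* MulAut N}
    (g : N ⋊[φ] H) : N ⋊[φ] H :=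
  inl g.left⁻¹ * inr g.right⁻¹

/-- For a semidirect product `G = G_L ⋊ G_R` with operation `·` and the
direct-product operation `∘` defined by `(g_L g_R⁻¹) ∘ h = g_L h g_R⁻¹`, the pair
`(G, ∘, ·)` is a bi-skew brace: both skew left brace compatibility conditions
`a ∘ (b · c) = (a ∘ b) · a⁻¹ · (a ∘ c)` and `a · (b ∘ c) = ((a · b) ∘ ā) ∘ (a · c)` hold. -/
theorem stmt10 (N H : Type*) [Group N] [Group H] [Fintype N] [Fintype H]
    (φ : H →* MulAut N) :
    ∀ a b c : N ⋊[φ] H,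
      circSD a (b * c) = circSD a b * a⁻¹ * circSD a c ∧
      a * circSD b c = circSD (circSD (a * b) (cinvSD a)) (a * c) := by
  intro a b c
  constructor <;>
  · ext <;>
      simp [circSD, cinvSD, SemidirectProduct.mul_left, SemidirectProduct.mul_right,
        SemidirectProduct.inv_left, SemidirectProduct.inv_right, mul_assoc]
end

section
/- Let m, n > 1 be coprime squarefree integers with n | φ(m), let b be an integer of multiplicative order n modulo m, let (G,+) = Z_m × Z_n with componentwise addition, and let (G,·) be the set Z_m × Z_n with the semidirect-product operation (r,s)·(r',s') = (r + b^s r', s + s'). Then every subgroup of (G,+) is also a subgroup of (G,·). -/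
/-- Let `m, n > 1` be coprime squarefree integers with `n ∣ φ(m)`, and let
`b` be a unit of multiplicative order `n` mod `m`.  With `(G,+) = Z_m × Z_n`
(componentwise addition) and the semidirect-product operation
`(r,s)·(r',s') = (r + b^s r', s + s')`, every subgroup of `(G,+)` is closed under `·`,
i.e. is also a subgroup of `(G,·)`. -/
theorem stmt15 (m n : ℕ) (hm : 1 < m) (hn : 1 < n)
    (hsfm : Squarefree m) (hsfn : Squarefree n)
    (hcop : Nat.Coprime m n) (hdiv : n ∣ Nat.totient m)
    (b : (ZMod m)ˣ) (hb : orderOf b = n)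
    (S : AddSubgroup (ZMod m × ZMod n)) :
    ∀ x ∈ S, ∀ y ∈ S,
      ((x.1 + (b : ZMod m) ^ x.2.val * y.1, x.2 + y.2) : ZMod m × ZMod n) ∈ S := by
  intro x hx y hy
  have hm0 : NeZero m := ⟨by omega⟩
  set c : ZMod m := (b : ZMod m) ^ x.2.val with hc
  -- choose k ≡ c mod m, k ≡ 1 mod n via CRT
  set k : ℕ := (Nat.chineseRemainder hcop c.val 1 : ℕ) with hk
  obtain ⟨hk1, hk2⟩ := (Nat.chineseRemainder hcop c.val 1).2
  have hkm : (k : ZMod m) = c := by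
    rw [hk, (ZMod.natCast_eq_natCast_iff _ _ _).mpr hk1, ZMod.natCast_val, ZMod.cast_id]
  have hkn : (k : ZMod n) = 1 := by
    rw [hk, (ZMod.natCast_eq_natCast_iff _ _ _).mpr hk2, Nat.cast_one]
  have hky : k • y ∈ S := AddSubgroup.nsmul_mem S hy k
  have hsum : x + k • y ∈ S := S.add_mem hx hky
  have : x + k • y = (x.1 + c * y.1, x.2 + y.2) := by
    ext
    · simp [Prod.smul_fst, nsmul_eq_mul, hkm]
    · simp [Prod.smul_snd, nsmul_eq_mul, hkn]
  rwa [this] at hsum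
end

section
/- Let m, n > 1 be coprime squarefree integers, b of multiplicative order n mod m, (G,+) = Z_m × Z_n (componentwise), (G,·) the semidirect product (r,s)·(r',s') = (r + b^s r', s + s'). Then every subgroup of (G,+) is ·-stable: for every subgroup G' of (G,+), every (x,y) ∈ G', and every g ∈ G, the element (g · (x,0) · g^{-1}) + (0,y) lies in G' (here g^{-1} is the inverse in (G,·)). Specifically, for g = (a,-h), one has g^{-1}·(x,0)·g + (0,y) = (b^h x, y). -/
/-- The semidirect-product operation `(r,s)·(r',s') = (r + b^s r', s + s')` on
`Z_m × Z_n`. -/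
def mulSD {m n : ℕ} (b : (ZMod m)ˣ) (x y : ZMod m × ZMod n) : ZMod m × ZMod n :=
  (x.1 + (b : ZMod m) ^ x.2.val * y.1, x.2 + y.2)

/-! Since `Z_m × Z_n ≅ Z_{mn}` is generated by `1` as a ring, multiplication by any of its
elements is multiplication by an integer, so every additive subgroup is an ideal. The
conjugate `g⁻¹·(x,0)·g + (0,y)` is `(b^h, 1) * (x, y)`, hence stays in the subgroup. -/

theorem AddSubgroup.mul_mem_of_intCast_surjective {R : Type*} [Ring R]
    (hR : Function.Surjective (Int.cast : ℤ → R)) (S : AddSubgroup R) (c : R) {p : R}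
    (hp : p ∈ S) : c * p ∈ S := by
  obtain ⟨k, rfl⟩ := hR c
  rw [← zsmul_eq_mul]
  exact S.zsmul_mem hp k

theorem ZMod.intCast_surjective_prod {m n : ℕ} (hcop : m.Coprime n) :
    Function.Surjective (Int.cast : ℤ → ZMod m × ZMod n) := by
  intro c
  obtain ⟨k, hk⟩ := ZMod.intCast_surjective ((ZMod.chineseRemainder hcop).symm c)
  exact ⟨k, by rw [← map_intCast (ZMod.chineseRemainder hcop), hk, RingEquiv.apply_symm_apply]⟩

theorem mulSD_conj_add {m n : ℕ} (b : (ZMod m)ˣ) (x a : ZMod m) (y h : ZMod n) :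
    mulSD b (mulSD b (-((b : ZMod m) ^ h.val * a), h) (x, 0)) (a, -h) + (0, y) =
      ((b : ZMod m) ^ h.val * x, y) := by
  simp only [mulSD, Prod.mk_add_mk, add_zero, add_neg_cancel, zero_add, Prod.mk.injEq,
    and_true]
  ring

theorem stmt16_general (m n : ℕ)
    (hcop : Nat.Coprime m n)
    (b : (ZMod m)ˣ)
    (S : AddSubgroup (ZMod m × ZMod n)) :
    ∀ x : ZMod m, ∀ y : ZMod n, (x, y) ∈ S → ∀ a : ZMod m, ∀ h : ZMod n,
      mulSD b (mulSD b (-((b : ZMod m) ^ h.val * a), h) (x, 0)) (a, -h) + (0, y) =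
          ((b : ZMod m) ^ h.val * x, y) ∧
      mulSD b (mulSD b (-((b : ZMod m) ^ h.val * a), h) (x, 0)) (a, -h) + (0, y) ∈ S := by
  intro x y hxy a h
  rw [mulSD_conj_add]
  refine ⟨rfl, ?_⟩
  simpa using S.mul_mem_of_intCast_surjective (ZMod.intCast_surjective_prod hcop)
    ((b : ZMod m) ^ h.val, 1) hxy

/-- With `m, n > 1` coprime squarefree, `b` of order `n` mod `m`, `(G,+)`
componentwise and `(G,·)` the semidirect product, every subgroup of `(G,+)` is ·-stable:
for every subgroup `S` of `(G,+)`, `(x,y) ∈ S`, and `g = (a,-h) ∈ G` (whose ·-inverse is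
`(-b^h a, h)`), one has `g⁻¹·(x,0)·g + (0,y) = (b^h x, y)`, and this element lies in `S`. -/
theorem stmt16 (m n : ℕ) (hm : 1 < m) (hn : 1 < n)
    (hsfm : Squarefree m) (hsfn : Squarefree n)
    (hcop : Nat.Coprime m n) (hdiv : n ∣ Nat.totient m)
    (b : (ZMod m)ˣ) (hb : orderOf b = n)
    (S : AddSubgroup (ZMod m × ZMod n)) :
    ∀ x : ZMod m, ∀ y : ZMod n, (x, y) ∈ S → ∀ a : ZMod m, ∀ h : ZMod n,
      mulSD b (mulSD b (-((b : ZMod m) ^ h.val * a), h) (x, 0)) (a, -h) + (0, y) =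
          ((b : ZMod m) ^ h.val * x, y) ∧
      mulSD b (mulSD b (-((b : ZMod m) ^ h.val * a), h) (x, 0)) (a, -h) + (0, y) ∈ S :=
  stmt16_general m n hcop b S
end

section
/- Let m = p₁⋯p_g be a product of g distinct odd primes and n = q₁⋯q_h a product of h distinct primes each dividing p_i - 1 for every i; let b have order n modulo every p_i. Then the number of subgroups of the semidirect product (G,·) = Z_m ⋊_b Z_n (operation (r,s)·(r',s') = (r + b^s r', s+s')) equals 2^g + (2^h - 1)·σ(m), where σ(m) = ∏_{i=1}^g (1 + p_i) is the sum of divisors of m. -/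
/-- A subgroup of `(Z_m ⋊_b Z_n, ·)` as a subset. -/
def IsSubSD {m n : ℕ} (b : (ZMod m)ˣ) (S : Set (ZMod m × ZMod n)) : Prop :=
  ((0, 0) : ZMod m × ZMod n) ∈ S ∧
  (∀ x ∈ S, ∀ y ∈ S, mulSD b x y ∈ S) ∧
  (∀ x ∈ S, ∃ y ∈ S, mulSD b x y = (0, 0) ∧ mulSD b y x = (0, 0))

set_option linter.unusedSectionVars false

namespace Stmt18

lemma pow_mod_eq {M : Type*} [Monoid M] {n : ℕ} (u : M) (hn : u ^ n = 1) (j : ℕ) :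
    u ^ j = u ^ (j % n) := by
  conv_lhs => rw [← Nat.div_add_mod j n, pow_add, pow_mul, hn, one_pow, one_mul]

lemma pow_eq_pow_of_mod {M : Type*} [Monoid M] {n : ℕ} (u : M) (hn : u ^ n = 1) {j j' : ℕ}
    (h : j % n = j' % n) : u ^ j = u ^ j' := by
  rw [pow_mod_eq u hn j, pow_mod_eq u hn j', h]

lemma pow_val_eq {M : Type*} [Monoid M] {n : ℕ} [NeZero n] (u : M) (hn : u ^ n = 1)
    {z : ZMod n} {j : ℕ} (h : (j : ZMod n) = z) : u ^ z.val = u ^ j := by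
  refine pow_eq_pow_of_mod u hn ?_
  rw [Nat.mod_eq_of_lt (ZMod.val_lt z), ← h, ZMod.val_natCast]

lemma pow_natCast_eq {M : Type*} [Monoid M] {n : ℕ} [NeZero n] (u : M) (hn : u ^ n = 1)
    {j j' : ℕ} (h : (j : ZMod n) = (j' : ZMod n)) : u ^ j = u ^ j' := by
  refine pow_eq_pow_of_mod u hn ?_
  have := congrArg ZMod.val h
  rwa [ZMod.val_natCast, ZMod.val_natCast] at this

/-- Every additively closed subset of `ZMod N` containing `0` is the set of multiples
of a divisor of `N`. -/
lemma set_classify (N : ℕ) [NeZero N] (H : Set (ZMod N)) (h0 : (0 : ZMod N) ∈ H)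
    (hadd : ∀ x ∈ H, ∀ y ∈ H, x + y ∈ H) :
    ∃ d, d ∣ N ∧ ∀ x : ZMod N, x ∈ H ↔ d ∣ x.val := by
  have hN : 0 < N := Nat.pos_of_ne_zero (NeZero.ne N)
  set D : Set ℕ := {v : ℕ | 0 < v ∧ ∃ x ∈ H, x.val = v} with hD
  by_cases hDne : D.Nonempty
  · obtain ⟨hdpos, x₀, hx₀H, hx₀v⟩ := Nat.sInf_mem hDne
    set d := sInf D with hdd
    have hmin : ∀ v ∈ D, d ≤ v := fun v hv => Nat.sInf_le hv
    have hx₀ : x₀ = ((d : ℕ) : ZMod N) := by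
      rw [← hx₀v, ZMod.natCast_rightInverse]
    have hdN : d < N := hx₀v ▸ ZMod.val_lt x₀
    have hkey : ∀ j : ℕ, ((j * d : ℕ) : ZMod N) ∈ H := by
      intro j
      induction j with
      | zero => simpa using h0
      | succ j ih =>
          have := hadd _ ih _ (hx₀ ▸ hx₀H)
          have h2 : ((j * d : ℕ) : ZMod N) + ((d : ℕ) : ZMod N) = (((j+1) * d : ℕ) : ZMod N) := by
            push_cast; ring
          rwa [h2] at this
    have hdvdN : d ∣ N := by
      rcases Nat.eq_zero_or_pos (N % d) with hr | hr
      · exact Nat.dvd_of_mod_eq_zero hr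
      · exfalso
        set r := N % d with hrdef
        have hrd : r < d := Nat.mod_lt _ hdpos
        have h1 : d * (N / d) + r = N := Nat.div_add_mod N d
        have harith : (N / d + 1) * d = N + (d - r) := by
          have h2 : (N / d + 1) * d = d * (N / d) + d := by ring
          omega
        have hmem := hkey (N / d + 1)
        rw [harith] at hmem
        have hcast : ((N + (d - r) : ℕ) : ZMod N) = ((d - r : ℕ) : ZMod N) := by
          push_cast; simp
        rw [hcast] at hmem
        have hval : (((d - r : ℕ) : ZMod N)).val = d - r :=
          ZMod.val_cast_of_lt (by omega)
        have := hmin (d - r) ⟨by omega, _, hmem, hval⟩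
        omega
    refine ⟨d, hdvdN, fun x => ⟨?_, ?_⟩⟩
    · intro hx
      by_contra hndvd
      set r := x.val % d with hrdef
      have hrpos : 0 < r := Nat.pos_of_ne_zero (fun h => hndvd (Nat.dvd_of_mod_eq_zero h))
      have hrd : r < d := Nat.mod_lt _ hdpos
      have hq : x.val / d ≤ N / d := Nat.div_le_div_right (le_of_lt (ZMod.val_lt x))
      obtain ⟨k, hk⟩ : ∃ k, k = N / d - x.val / d := ⟨_, rfl⟩
      have hmem := hadd _ hx _ (hkey k)
      have h1 : d * (x.val / d) + r = x.val := Nat.div_add_mod x.val d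
      have h2 : N / d * d = N := Nat.div_mul_cancel hdvdN
      have h3 : (N / d - x.val / d) * d = N / d * d - x.val / d * d := Nat.sub_mul _ _ _
      have h4 : x.val / d * d ≤ N / d * d := Nat.mul_le_mul_right d hq
      have harith : x.val + k * d = r + N := by
        have h5 : x.val / d * d = d * (x.val / d) := mul_comm _ _
        have h6 : k * d = (N / d - x.val / d) * d := by rw [hk]
        omega
      have hx2 : x + (((k * d : ℕ)) : ZMod N) = ((r : ℕ) : ZMod N) := by
        have hr2 : ((x.val + k * d : ℕ) : ZMod N) = ((r + N : ℕ) : ZMod N) := by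
          rw [harith]
        push_cast at hr2 ⊢
        rw [ZMod.natCast_rightInverse x] at hr2
        simpa using hr2
      rw [hx2] at hmem
      have hval : (((r : ℕ) : ZMod N)).val = r := ZMod.val_cast_of_lt (by omega)
      have := hmin r ⟨hrpos, _, hmem, hval⟩
      omega
    · intro hx
      obtain ⟨k, hk⟩ := hx
      have := hkey k
      rw [mul_comm] at hk
      rw [← hk, ZMod.natCast_rightInverse x] at this
      exact this
  · refine ⟨N, dvd_rfl, fun x => ⟨?_, ?_⟩⟩
    · intro hx
      have hv : x.val = 0 := by
        by_contra hv
        exact hDne ⟨x.val, Nat.pos_of_ne_zero hv, x, hx, rfl⟩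
      simp [hv]
    · intro hx
      have hv : x.val = 0 := Nat.eq_zero_of_dvd_of_lt hx (ZMod.val_lt x)
      have : x = 0 := (ZMod.val_eq_zero x).1 hv
      rw [this]; exact h0

/-- two divisors cutting out the same multiples-set are equal -/
lemma dvd_val_faithful {N : ℕ} [NeZero N] {d d' : ℕ} (hd : d ∣ N) (hd' : d' ∣ N)
    (h : ∀ x : ZMod N, d ∣ x.val ↔ d' ∣ x.val) : d = d' := by
  have key : ∀ e e' : ℕ, e ∣ N → e' ∣ N → (∀ x : ZMod N, e ∣ x.val ↔ e' ∣ x.val) → e' ∣ e := by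
    intro e e' he he' hh
    have h1 : e ∣ (((e : ℕ) : ZMod N)).val := by
      rw [ZMod.val_natCast]
      have hda := Nat.div_add_mod e N
      have h2 : e % N = e - N * (e / N) := by omega
      rw [h2]
      exact Nat.dvd_sub dvd_rfl (dvd_mul_of_dvd_left he _)
    have h3 : e' ∣ e % N := by
      have := (hh ((e : ℕ) : ZMod N)).1 h1
      rwa [ZMod.val_natCast] at this
    have hda := Nat.div_add_mod e N
    have h4 : e' ∣ N * (e / N) := dvd_mul_of_dvd_left he' _
    exact hda ▸ Nat.dvd_add h4 h3
  exact Nat.dvd_antisymm (key d' d hd' hd (fun x => (h x).symm)) (key d d' hd hd' h)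


variable {m n : ℕ}

/-- type-A model subgroup: `H × {0}` for `H` the multiples of `d`. -/
def SDA (n : ℕ) {d : ℕ} (hd : d ∣ m) : Set (ZMod m × ZMod n) :=
  {p | p.2 = 0 ∧ ZMod.castHom hd (ZMod d) p.1 = 0}

/-- type-B model subgroup. -/
def SDB {f d : ℕ} (hf : f ∣ n) (hd : d ∣ m) (b : (ZMod m)ˣ) (a : ℕ) :
    Set (ZMod m × ZMod n) :=
  {p | ZMod.castHom hf (ZMod f) p.2 = 0 ∧
    ZMod.castHom hd (ZMod d) p.1
      = (1 - (ZMod.castHom hd (ZMod d) (b : ZMod m)) ^ p.2.val) * (a : ZMod d)}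

variable [NeZero m] [NeZero n] (b : (ZMod m)ˣ)

lemma isSubSD_SDA {d : ℕ} (hd : d ∣ m) : IsSubSD b (SDA (m := m) n hd) := by
  refine ⟨⟨rfl, map_zero _⟩, ?_, ?_⟩
  · rintro ⟨x1, x2⟩ ⟨hx2, hx1⟩ ⟨y1, y2⟩ ⟨hy2, hy1⟩
    dsimp only at hx2 hx1 hy2 hy1
    refine ⟨?_, ?_⟩
    · show x2 + y2 = 0
      rw [hx2, hy2, add_zero]
    · show ZMod.castHom hd (ZMod d) (x1 + (b : ZMod m) ^ x2.val * y1) = 0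
      rw [map_add, map_mul, hx1, hy1, mul_zero, add_zero]
  · rintro ⟨x1, x2⟩ ⟨hx2, hx1⟩
    dsimp only at hx2 hx1
    subst hx2
    refine ⟨(-x1, 0), ⟨rfl, by rw [map_neg, hx1, neg_zero]⟩, ?_, ?_⟩
    · refine Prod.ext ?_ ?_
      · show x1 + (b : ZMod m) ^ ((0 : ZMod n)).val * (-x1) = 0
        rw [ZMod.val_zero, pow_zero]
        ring
      · show (0 : ZMod n) + 0 = 0
        ring
    · refine Prod.ext ?_ ?_
      · show -x1 + (b : ZMod m) ^ ((0 : ZMod n)).val * x1 = 0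
        rw [ZMod.val_zero, pow_zero]
        ring
      · show (0 : ZMod n) + 0 = 0
        ring

lemma isSubSD_SDB (hb : b ^ n = 1) {f d : ℕ} (hf : f ∣ n) (hd : d ∣ m) (a : ℕ) :
    IsSubSD b (SDB hf hd b a) := by
  have hbc : (b : ZMod m) ^ n = 1 := by
    rw [← Units.val_pow_eq_pow_val, hb, Units.val_one]
  set φ := ZMod.castHom hd (ZMod d) with hφ
  have hW : (φ ((b : ZMod m))) ^ n = 1 := by rw [← map_pow, hbc, map_one]
  refine ⟨⟨map_zero _, by simp [ZMod.val_zero]⟩, ?_, ?_⟩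
  · rintro ⟨x1, x2⟩ ⟨hx2, hx1⟩ ⟨y1, y2⟩ ⟨hy2, hy1⟩
    dsimp only at hx2 hx1 hy2 hy1
    refine ⟨?_, ?_⟩
    · show ZMod.castHom hf (ZMod f) (x2 + y2) = 0
      rw [map_add, hx2, hy2, add_zero]
    have hv : ((x2.val + y2.val : ℕ) : ZMod n) = x2 + y2 := by
      rw [Nat.cast_add, ZMod.natCast_rightInverse, ZMod.natCast_rightInverse]
    have hpw : (φ ((b : ZMod m))) ^ (x2 + y2).val = (φ ((b : ZMod m))) ^ (x2.val + y2.val) :=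
      pow_val_eq _ hW hv
    show φ (x1 + (b : ZMod m) ^ x2.val * y1)
        = (1 - (φ ((b : ZMod m))) ^ ((x2 + y2 : ZMod n)).val) * (a : ZMod d)
    rw [map_add, map_mul, map_pow, hx1, hy1, hpw, pow_add]
    ring
  · rintro ⟨x1, x2⟩ ⟨hx2, hx1⟩
    dsimp only at hx2 hx1
    have hv0 : (((-x2).val + x2.val : ℕ) : ZMod n) = ((0 : ℕ) : ZMod n) := by
      rw [Nat.cast_add, ZMod.natCast_rightInverse, ZMod.natCast_rightInverse]
      simp
    have hpos : (b : ZMod m) ^ ((-x2).val + x2.val) = 1 := by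
      rw [pow_natCast_eq _ hbc hv0, pow_zero]
    have hWpos : (φ ((b : ZMod m))) ^ ((-x2).val + x2.val) = 1 := by
      rw [pow_natCast_eq _ hW hv0, pow_zero]
    refine ⟨(-((b : ZMod m) ^ (-x2).val) * x1, -x2), ⟨?_, ?_⟩, ?_, ?_⟩
    · rw [map_neg, hx2, neg_zero]
    · show φ (-((b : ZMod m) ^ (-x2).val) * x1)
        = (1 - (φ ((b : ZMod m))) ^ ((-x2 : ZMod n)).val) * (a : ZMod d)
      rw [map_mul, map_neg, map_pow, hx1]
      have : (φ ((b : ZMod m))) ^ (-x2).val * (φ ((b : ZMod m))) ^ x2.val = 1 := by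
        rw [← pow_add, hWpos]
      calc -(φ ((b : ZMod m))) ^ (-x2).val
            * ((1 - (φ ((b : ZMod m))) ^ x2.val) * (a : ZMod d))
          = ((φ ((b : ZMod m))) ^ (-x2).val * (φ ((b : ZMod m))) ^ x2.val
              - (φ ((b : ZMod m))) ^ (-x2).val) * (a : ZMod d) := by ring
        _ = (1 - (φ ((b : ZMod m))) ^ ((-x2 : ZMod n)).val) * (a : ZMod d) := by rw [this]
    · show ((x1 + (b : ZMod m) ^ x2.val * (-((b : ZMod m) ^ (-x2).val) * x1), x2 + -x2)
          : ZMod m × ZMod n) = (0, 0)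
      have : (b : ZMod m) ^ x2.val * ((b : ZMod m) ^ (-x2).val) = 1 := by
        rw [← pow_add, add_comm, hpos]
      refine Prod.ext ?_ (by simp)
      show x1 + (b : ZMod m) ^ x2.val * (-((b : ZMod m) ^ (-x2).val) * x1) = 0
      calc x1 + (b : ZMod m) ^ x2.val * (-((b : ZMod m) ^ (-x2).val) * x1)
          = x1 - ((b : ZMod m) ^ x2.val * ((b : ZMod m) ^ (-x2).val)) * x1 := by ring
        _ = 0 := by rw [this]; ring
    · show ((-((b : ZMod m) ^ (-x2).val) * x1 + (b : ZMod m) ^ (-x2).val * x1, -x2 + x2)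
          : ZMod m × ZMod n) = (0, 0)
      refine Prod.ext (by ring) (by simp)

lemma castHom_eq_zero_iff {m d : ℕ} [NeZero m] [NeZero d] (hd : d ∣ m) (x : ZMod m) :
    ZMod.castHom hd (ZMod d) x = 0 ↔ d ∣ x.val := by
  conv_lhs => rw [← ZMod.natCast_rightInverse x]
  rw [map_natCast, ZMod.natCast_eq_zero_iff]

lemma classify (hb : b ^ n = 1)
    (hunit : ∀ s : ℕ, ¬ n ∣ s → IsUnit ((1 : ZMod m) - (b : ZMod m) ^ s))
    (S : Set (ZMod m × ZMod n)) (hS : IsSubSD b S) :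
    (∃ d, ∃ hd : d ∣ m, S = SDA n hd) ∨
    (∃ f, ∃ hf : f ∣ n, f ≠ n ∧ ∃ d, ∃ hd : d ∣ m, ∃ a : ℕ, a < d ∧ S = SDB hf hd b a) := by
  obtain ⟨h0, hmul, hinv⟩ := hS
  have hbc : (b : ZMod m) ^ n = 1 := by rw [← Units.val_pow_eq_pow_val, hb, Units.val_one]
  have hHadd : ∀ x ∈ {x : ZMod m | (x, (0 : ZMod n)) ∈ S}, ∀ y ∈ {x : ZMod m | (x, (0 : ZMod n)) ∈ S},
      x + y ∈ {x : ZMod m | (x, (0 : ZMod n)) ∈ S} := by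
    intro x hx y hy
    have hmm := hmul _ hx _ hy
    have he : mulSD b (x, (0 : ZMod n)) (y, 0) = (x + y, 0) := by
      unfold mulSD
      refine Prod.ext ?_ ?_
      · show x + (b : ZMod m) ^ ((0 : ZMod n)).val * y = x + y
        rw [ZMod.val_zero, pow_zero, one_mul]
      · show (0 : ZMod n) + 0 = 0
        rw [add_zero]
    rwa [he] at hmm
  obtain ⟨d, hd, hH⟩ := set_classify m {x : ZMod m | (x, (0 : ZMod n)) ∈ S} h0 hHadd
  haveI : NeZero d := ⟨fun h => (NeZero.ne m) (by subst h; exact Nat.eq_zero_of_zero_dvd hd)⟩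
  have hKadd : ∀ s ∈ {s : ZMod n | ∃ x, (x, s) ∈ S}, ∀ t ∈ {s : ZMod n | ∃ x, (x, s) ∈ S},
      s + t ∈ {s : ZMod n | ∃ x, (x, s) ∈ S} := by
    rintro s ⟨x, hx⟩ t ⟨y, hy⟩
    exact ⟨_, hmul _ hx _ hy⟩
  obtain ⟨f, hf, hK⟩ := set_classify n {s : ZMod n | ∃ x, (x, s) ∈ S} ⟨0, h0⟩ hKadd
  haveI : NeZero f := ⟨fun h => (NeZero.ne n) (by subst h; exact Nat.eq_zero_of_zero_dvd hf)⟩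
  by_cases hfn : f = n
  · left
    refine ⟨d, hd, ?_⟩
    ext ⟨x, s⟩
    constructor
    · intro hxs
      have hsK : n ∣ s.val := hfn ▸ (hK s).1 ⟨x, hxs⟩
      have hs0 : s = 0 :=
        (ZMod.val_eq_zero s).1 (Nat.eq_zero_of_dvd_of_lt hsK (ZMod.val_lt s))
      subst hs0
      exact ⟨rfl, (castHom_eq_zero_iff hd x).2 ((hH x).1 hxs)⟩
    · rintro ⟨hs2, hx1⟩
      dsimp only at hs2 hx1
      subst hs2
      exact (hH x).2 ((castHom_eq_zero_iff hd x).1 hx1)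
  · right
    have hnpos : 0 < n := Nat.pos_of_ne_zero (NeZero.ne n)
    have hfpos : 0 < f := Nat.pos_of_dvd_of_pos hf hnpos
    have hfn' : f < n := lt_of_le_of_ne (Nat.le_of_dvd hnpos hf) hfn
    have hndf : ¬ n ∣ f := fun hc => absurd (Nat.le_of_dvd hfpos hc) (by omega)
    have hu : IsUnit ((1 : ZMod m) - (b : ZMod m) ^ f) := hunit f hndf
    have hs₀v : (((f : ℕ) : ZMod n)).val = f := ZMod.val_cast_of_lt hfn'
    obtain ⟨x₀, hx₀⟩ : ∃ x, (x, ((f : ℕ) : ZMod n)) ∈ S := (hK _).2 (by simp [hs₀v])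
    set a_full := ((hu.unit⁻¹ : (ZMod m)ˣ) : ZMod m) * x₀ with ha_full
    have h1 : ((1 : ZMod m) - (b : ZMod m) ^ f) * ((hu.unit⁻¹ : (ZMod m)ˣ) : ZMod m) = 1 :=
      hu.mul_val_inv
    have hx₀a : x₀ = ((1 : ZMod m) - (b : ZMod m) ^ f) * a_full := by
      rw [ha_full, ← mul_assoc, h1, one_mul]
    have hpow : ∀ k : ℕ,
        (((1 : ZMod m) - (b : ZMod m) ^ (k * f)) * a_full, ((k * f : ℕ) : ZMod n)) ∈ S := by
      intro k
      induction k with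
      | zero => simpa using h0
      | succ k ih =>
          have hmm := hmul _ ih _ hx₀
          have he : mulSD b (((1 : ZMod m) - (b : ZMod m) ^ (k * f)) * a_full,
                ((k * f : ℕ) : ZMod n)) (x₀, ((f : ℕ) : ZMod n))
              = (((1 : ZMod m) - (b : ZMod m) ^ ((k + 1) * f)) * a_full,
                (((k + 1) * f : ℕ) : ZMod n)) := by
            unfold mulSD
            refine Prod.ext ?_ ?_
            · show ((1 : ZMod m) - (b : ZMod m) ^ (k * f)) * a_full
                  + (b : ZMod m) ^ ((((k * f : ℕ) : ZMod n)).val) * x₀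
                = ((1 : ZMod m) - (b : ZMod m) ^ ((k + 1) * f)) * a_full
              rw [pow_val_eq (b : ZMod m) hbc (rfl : ((k * f : ℕ) : ZMod n) = _), hx₀a,
                Nat.succ_mul, pow_add]
              ring
            · show ((k * f : ℕ) : ZMod n) + ((f : ℕ) : ZMod n) = (((k + 1) * f : ℕ) : ZMod n)
              push_cast
              ring
          rwa [he] at hmm
    have hmemS : ∀ s : ZMod n, f ∣ s.val →
        (((1 : ZMod m) - (b : ZMod m) ^ s.val) * a_full, s) ∈ S := by
      intro s hfs
      obtain ⟨k, hk⟩ := hfs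
      have hp := hpow k
      have h1 : ((k * f : ℕ) : ZMod n) = s := by
        rw [mul_comm, ← hk, ZMod.natCast_rightInverse]
      have h2 : k * f = s.val := by rw [mul_comm, ← hk]
      rw [h1, h2] at hp
      exact hp
    set a : ℕ := (ZMod.castHom hd (ZMod d) a_full).val with ha_def
    have ha : a < d := ZMod.val_lt _
    have hacast : ((a : ℕ) : ZMod d) = ZMod.castHom hd (ZMod d) a_full :=
      ZMod.natCast_rightInverse _
    refine ⟨f, hf, hfn, d, hd, a, ha, ?_⟩
    ext ⟨x, s⟩
    constructor
    · intro hxs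
      have hsK : f ∣ s.val := (hK s).1 ⟨x, hxs⟩
      refine ⟨(castHom_eq_zero_iff hf s).2 hsK, ?_⟩
      show ZMod.castHom hd (ZMod d) x
          = (1 - (ZMod.castHom hd (ZMod d) ((b : ZMod m))) ^ s.val) * ((a : ℕ) : ZMod d)
      have hw := hmemS s hsK
      obtain ⟨y, hyS, hy1, hy2⟩ := hinv _ hw
      have hy1f := congrArg Prod.fst hy1
      have hy1s := congrArg Prod.snd hy1
      dsimp [mulSD] at hy1f hy1s
      have hz := hmul _ hxs _ hyS
      have he : mulSD b (x, s) y
          = (x - (((1 : ZMod m) - (b : ZMod m) ^ s.val) * a_full), 0) := by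
        unfold mulSD
        refine Prod.ext ?_ ?_
        · show x + (b : ZMod m) ^ s.val * y.1
              = x - (((1 : ZMod m) - (b : ZMod m) ^ s.val) * a_full)
          have hinv1 : (b : ZMod m) ^ s.val * y.1
              = -(((1 : ZMod m) - (b : ZMod m) ^ s.val) * a_full) := by
            linear_combination hy1f
          rw [hinv1]
          ring
        · show s + y.2 = 0
          exact hy1s
      rw [he] at hz
      have hHz : d ∣ ((x - (((1 : ZMod m) - (b : ZMod m) ^ s.val) * a_full))).val :=
        (hH _).1 hz
      have hφ := (castHom_eq_zero_iff hd _).2 hHz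
      rw [map_sub, map_mul, map_sub, map_one, map_pow] at hφ
      rw [hacast]
      linear_combination hφ
    · rintro ⟨hs2, hx1⟩
      dsimp only at hs2 hx1
      have hsv : f ∣ s.val := (castHom_eq_zero_iff hf s).1 hs2
      have hw := hmemS s hsv
      have hxw : d ∣ ((x - (((1 : ZMod m) - (b : ZMod m) ^ s.val) * a_full))).val := by
        apply (castHom_eq_zero_iff hd _).1
        rw [map_sub, map_mul, map_sub, map_one, map_pow, hx1, hacast]
        ring
      have hxwS := (hH _).2 hxw
      have hmm := hmul _ hxwS _ hw
      have he : mulSD b ((x - (((1 : ZMod m) - (b : ZMod m) ^ s.val) * a_full)), (0 : ZMod n))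
          ((((1 : ZMod m) - (b : ZMod m) ^ s.val) * a_full), s) = (x, s) := by
        unfold mulSD
        refine Prod.ext ?_ ?_
        · show (x - (((1 : ZMod m) - (b : ZMod m) ^ s.val) * a_full))
              + (b : ZMod m) ^ ((0 : ZMod n)).val
                * ((((1 : ZMod m) - (b : ZMod m) ^ s.val) * a_full)) = x
          rw [ZMod.val_zero, pow_zero, one_mul]
          ring
        · show (0 : ZMod n) + s = s
          rw [zero_add]
      rwa [he] at hmm

lemma SDB_exists {f d : ℕ} (hf : f ∣ n) (hd : d ∣ m) (a : ℕ) (s : ZMod n)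
    (hs : ZMod.castHom hf (ZMod f) s = 0) : ∃ x, (x, s) ∈ SDB hf hd b a := by
  haveI : NeZero d := ⟨fun hz => (NeZero.ne m) (by subst hz; exact Nat.eq_zero_of_zero_dvd hd)⟩
  exact ⟨((((1 - (ZMod.castHom hd (ZMod d) ((b : ZMod m))) ^ s.val) * (a : ZMod d) : ZMod d)).val
      : ℕ), hs, by rw [map_natCast, ZMod.natCast_rightInverse]⟩

lemma mem_SDB_zero_iff {f d : ℕ} (hf : f ∣ n) (hd : d ∣ m) (a : ℕ) (x : ZMod m) :
    ((x, (0 : ZMod n)) ∈ SDB hf hd b a) ↔ ZMod.castHom hd (ZMod d) x = 0 := by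
  constructor
  · rintro ⟨h1, h2⟩
    dsimp only at h2
    rwa [ZMod.val_zero, pow_zero, sub_self, zero_mul] at h2
  · intro hh
    refine ⟨map_zero _, ?_⟩
    show ZMod.castHom hd (ZMod d) x = _
    rw [ZMod.val_zero, pow_zero, sub_self, zero_mul, hh]

lemma SDA_inj {d d' : ℕ} (hd : d ∣ m) (hd' : d' ∣ m)
    (h : SDA (m := m) n hd = SDA (m := m) n hd') : d = d' := by
  haveI : NeZero d := ⟨fun hz => (NeZero.ne m) (by subst hz; exact Nat.eq_zero_of_zero_dvd hd)⟩
  haveI : NeZero d' := ⟨fun hz => (NeZero.ne m) (by subst hz; exact Nat.eq_zero_of_zero_dvd hd')⟩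
  refine dvd_val_faithful hd hd' fun x => ?_
  have hx := Set.ext_iff.1 h (x, 0)
  rw [← castHom_eq_zero_iff hd x, ← castHom_eq_zero_iff hd' x]
  constructor
  · intro hh
    exact (hx.1 ⟨rfl, hh⟩).2
  · intro hh
    exact (hx.2 ⟨rfl, hh⟩).2

lemma SDA_ne_SDB {d f d' : ℕ} (hd : d ∣ m) (hf : f ∣ n) (hfn : f ≠ n) (hd' : d' ∣ m) (a : ℕ) :
    SDA (m := m) n hd ≠ SDB hf hd' b a := by
  intro h
  obtain ⟨x, hx⟩ := SDB_exists b hf hd' a ((f : ℕ) : ZMod n)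
    (by rw [map_natCast, ZMod.natCast_self])
  rw [← h] at hx
  have hz := hx.1
  dsimp only at hz
  have hnf : (n : ℕ) ∣ f := (ZMod.natCast_eq_zero_iff f n).1 hz
  exact hfn (Nat.dvd_antisymm hf hnf)

lemma SDB_inj (hunit : ∀ s : ℕ, ¬ n ∣ s → IsUnit ((1 : ZMod m) - (b : ZMod m) ^ s))
    {f d f' d' : ℕ} (hf : f ∣ n) (hfn : f ≠ n) (hd : d ∣ m) (hf' : f' ∣ n) (hfn' : f' ≠ n)
    (hd' : d' ∣ m) {a a' : ℕ} (ha : a < d) (ha' : a' < d')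
    (h : SDB hf hd b a = SDB hf' hd' b a') : f = f' ∧ d = d' ∧ a = a' := by
  haveI : NeZero d := ⟨fun hz => (NeZero.ne m) (by subst hz; exact Nat.eq_zero_of_zero_dvd hd)⟩
  haveI : NeZero d' := ⟨fun hz => (NeZero.ne m) (by subst hz; exact Nat.eq_zero_of_zero_dvd hd')⟩
  haveI : NeZero f := ⟨fun hz => (NeZero.ne n) (by subst hz; exact Nat.eq_zero_of_zero_dvd hf)⟩
  haveI : NeZero f' := ⟨fun hz => (NeZero.ne n) (by subst hz; exact Nat.eq_zero_of_zero_dvd hf')⟩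
  have hff : f = f' := by
    refine dvd_val_faithful hf hf' fun s => ?_
    constructor
    · intro hh
      obtain ⟨x, hx⟩ := SDB_exists b hf hd a s ((castHom_eq_zero_iff hf s).2 hh)
      rw [h] at hx
      exact (castHom_eq_zero_iff hf' s).1 hx.1
    · intro hh
      obtain ⟨x, hx⟩ := SDB_exists b hf' hd' a' s ((castHom_eq_zero_iff hf' s).2 hh)
      rw [← h] at hx
      exact (castHom_eq_zero_iff hf s).1 hx.1
  have hdd : d = d' := by
    refine dvd_val_faithful hd hd' fun x => ?_
    have hx := Set.ext_iff.1 h (x, 0)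
    rw [mem_SDB_zero_iff b hf hd a x, mem_SDB_zero_iff b hf' hd' a' x] at hx
    rw [← castHom_eq_zero_iff hd x, ← castHom_eq_zero_iff hd' x]
    exact hx
  subst hff
  subst hdd
  refine ⟨rfl, rfl, ?_⟩
  have hnpos : 0 < n := Nat.pos_of_ne_zero (NeZero.ne n)
  have hfpos : 0 < f := Nat.pos_of_dvd_of_pos hf hnpos
  have hfn2 : f < n := lt_of_le_of_ne (Nat.le_of_dvd hnpos hf) hfn
  have hndf : ¬ n ∣ f := fun hc => absurd (Nat.le_of_dvd hfpos hc) (by omega)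
  have hsv : (((f : ℕ) : ZMod n)).val = f := ZMod.val_cast_of_lt hfn2
  obtain ⟨x, hx⟩ := SDB_exists b hf hd a ((f : ℕ) : ZMod n)
    (by rw [map_natCast, ZMod.natCast_self])
  have hx' := hx
  rw [h] at hx'
  have h1 := hx.2
  have h2 := hx'.2
  dsimp only at h1 h2
  rw [h1] at h2
  rw [hsv] at h2
  have huW : IsUnit ((1 : ZMod d) - (ZMod.castHom hd (ZMod d) ((b : ZMod m))) ^ f) := by
    have := (hunit f hndf).map (ZMod.castHom hd (ZMod d))
    rwa [map_sub, map_one, map_pow] at this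
  have hc := huW.mul_left_cancel h2
  have := congrArg ZMod.val hc
  rw [ZMod.val_natCast, ZMod.val_natCast] at this
  rw [Nat.mod_eq_of_lt ha, Nat.mod_eq_of_lt ha'] at this
  exact this

def TIndex (m n : ℕ) : Type :=
  {d : ℕ // d ∈ m.divisors} ⊕
    ({f : ℕ // f ∈ n.divisors.erase n} × Σ d : {d : ℕ // d ∈ m.divisors}, Fin d.1)

instance (m n : ℕ) : Fintype (TIndex m n) := by unfold TIndex; infer_instance

lemma card_TIndex (m n : ℕ) (hn : n ≠ 0) :
    Fintype.card (TIndex m n)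
      = m.divisors.card + (n.divisors.card - 1) * ∑ d ∈ m.divisors, d := by
  have : Fintype.card (TIndex m n)
      = Fintype.card {d : ℕ // d ∈ m.divisors}
        + Fintype.card {f : ℕ // f ∈ n.divisors.erase n}
          * Fintype.card (Σ d : {d : ℕ // d ∈ m.divisors}, Fin d.1) := by
    unfold TIndex
    rw [Fintype.card_sum, Fintype.card_prod]
  rw [this, Fintype.card_sigma]
  simp only [Fintype.card_coe, Fintype.card_fin]
  congr 1
  have h1 : (n.divisors.erase n).card = n.divisors.card - 1 :=
    Finset.card_erase_of_mem (Nat.mem_divisors_self n hn)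
  have h2 : (∑ d : {d : ℕ // d ∈ m.divisors}, (d : ℕ)) = ∑ d ∈ m.divisors, d :=
    Finset.sum_coe_sort m.divisors (fun d => d)
  rw [h1, h2]

theorem count_subSD (hb : b ^ n = 1)
    (hunit : ∀ s : ℕ, ¬ n ∣ s → IsUnit ((1 : ZMod m) - (b : ZMod m) ^ s)) :
    Nat.card {S : Set (ZMod m × ZMod n) // IsSubSD b S}
      = m.divisors.card + (n.divisors.card - 1) * ∑ d ∈ m.divisors, d := by
  classical
  let ψ : TIndex m n → {S : Set (ZMod m × ZMod n) // IsSubSD b S} := fun t =>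
    match t with
    | Sum.inl d => ⟨SDA n (Nat.dvd_of_mem_divisors d.2), isSubSD_SDA b _⟩
    | Sum.inr (f, ⟨d, a⟩) =>
        ⟨SDB (Nat.dvd_of_mem_divisors (Finset.mem_of_mem_erase f.2))
          (Nat.dvd_of_mem_divisors d.2) b a.val, isSubSD_SDB b hb _ _ _⟩
  have hbij : Function.Bijective ψ := by
    constructor
    · rintro (⟨d, hdm⟩ | ⟨⟨f, hfm⟩, ⟨⟨d, hdm⟩, a⟩⟩) (⟨d', hdm'⟩ | ⟨⟨f', hfm'⟩, ⟨⟨d', hdm'⟩, a'⟩⟩) hψ <;>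
        simp only [ψ, Subtype.mk.injEq] at hψ
      · cases SDA_inj _ _ hψ
        rfl
      · exact absurd hψ (SDA_ne_SDB b _ _ (Finset.mem_erase.1 hfm').1 _ _)
      · exact absurd hψ.symm (SDA_ne_SDB b _ _ (Finset.mem_erase.1 hfm).1 _ _)
      · obtain ⟨hff, hdd, haa⟩ := SDB_inj b hunit _ (Finset.mem_erase.1 hfm).1 _ _
          (Finset.mem_erase.1 hfm').1 _ a.isLt a'.isLt hψ
        subst hff
        subst hdd
        cases Fin.ext haa
        rfl
    · rintro ⟨S, hS⟩
      rcases classify b hb hunit S hS with ⟨d, hd, rfl⟩ | ⟨f, hf, hfn, d, hd, a, ha, rfl⟩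
      · exact ⟨Sum.inl ⟨d, Nat.mem_divisors.2 ⟨hd, NeZero.ne m⟩⟩, rfl⟩
      · exact ⟨Sum.inr (⟨f, Finset.mem_erase.2 ⟨hfn, Nat.mem_divisors.2 ⟨hf, NeZero.ne n⟩⟩⟩,
          ⟨⟨d, Nat.mem_divisors.2 ⟨hd, NeZero.ne m⟩⟩, ⟨a, ha⟩⟩), rfl⟩
  have hcard := Nat.card_eq_of_bijective ψ hbij
  rw [← hcard, Nat.card_eq_fintype_card, card_TIndex m n (NeZero.ne n)]

lemma sqfree_prod (P : Finset ℕ) (hP : ∀ p ∈ P, p.Prime) : Squarefree (∏ p ∈ P, p) := by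
  induction P using Finset.cons_induction with
  | empty => simpa using squarefree_one
  | cons p P hp ih =>
      rw [Finset.prod_cons, Nat.squarefree_mul_iff]
      refine ⟨?_, (hP p (Finset.mem_cons_self _ _)).squarefree,
        ih (fun q hq => hP q (Finset.mem_cons_of_mem hq))⟩
      refine Nat.Coprime.prod_right fun q hq => ?_
      exact (Nat.coprime_primes (hP p (Finset.mem_cons_self _ _))
        (hP q (Finset.mem_cons_of_mem hq))).2 (fun he => hp (he ▸ hq))

lemma tau_prod (P : Finset ℕ) (hP : ∀ p ∈ P, p.Prime) :
    (∏ p ∈ P, p).divisors.card = 2 ^ P.card := by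
  have hne : (∏ p ∈ P, p) ≠ 0 :=
    Finset.prod_ne_zero_iff.2 (fun p hp => (hP p hp).ne_zero)
  rw [Nat.card_divisors hne, Nat.primeFactors_prod hP]
  have hone : ∀ p ∈ P, (∏ q ∈ P, q).factorization p + 1 = 2 := by
    intro p hp
    rw [Nat.factorization_eq_one_of_squarefree (sqfree_prod P hP) (hP p hp)
      (Finset.dvd_prod_of_mem _ hp)]
  rw [Finset.prod_congr rfl hone, Finset.prod_const]

end Stmt18

/-- Let `m = p₁⋯p_g` (distinct odd primes), `n = q₁⋯q_h` (distinct primes,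
each dividing every `p_i - 1`), and let `b` have order `n` modulo every `p_i`.  Then the
number of subgroups of `Z_m ⋊_b Z_n` equals `2^g + (2^h - 1)·σ(m)`, where `σ(m)` is the
sum of divisors of `m`. -/
theorem stmt18 (g h : ℕ) (P Q : Finset ℕ)
    (hP : ∀ p ∈ P, p.Prime ∧ Odd p) (hQ : ∀ q ∈ Q, q.Prime)
    (hg : P.card = g) (hh : Q.card = h)
    (m n : ℕ) (hm : m = ∏ p ∈ P, p) (hn : n = ∏ q ∈ Q, q)
    (hdvd : ∀ q ∈ Q, ∀ p ∈ P, q ∣ p - 1)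
    (b : (ZMod m)ˣ)
    (hord : ∀ p ∈ P, ∀ (hpm : p ∣ m), orderOf (ZMod.unitsMap hpm b) = n) :
    Nat.card {S : Set (ZMod m × ZMod n) // IsSubSD b S} =
      2 ^ g + (2 ^ h - 1) * (∑ d ∈ Nat.divisors m, d) := by

  have hP' : ∀ p ∈ P, p.Prime := fun p hp => (hP p hp).1
  have hmne : m ≠ 0 := by
    rw [hm]; exact Finset.prod_ne_zero_iff.2 (fun p hp => (hP' p hp).ne_zero)
  have hnne : n ≠ 0 := by
    rw [hn]; exact Finset.prod_ne_zero_iff.2 (fun q hq => (hQ q hq).ne_zero)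
  haveI : NeZero m := ⟨hmne⟩
  haveI : NeZero n := ⟨hnne⟩
  have hPmem : ∀ p : ℕ, p.Prime → p ∣ m → p ∈ P := by
    intro p pp hpm
    rw [hm] at hpm
    obtain ⟨q, hq, hpq⟩ := pp.prime.exists_mem_finset_dvd hpm
    rwa [(Nat.prime_dvd_prime_iff_eq pp (hP' q hq)).1 hpq]
  have hb : b ^ n = 1 := by
    have key : ∀ p ∈ P, (p : ℕ) ∣ (((b ^ n : (ZMod m)ˣ) : ZMod m) - 1).val := by
      intro p hp
      have hpm : p ∣ m := hm ▸ Finset.dvd_prod_of_mem _ hp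
      haveI : NeZero p := ⟨(hP' p hp).ne_zero⟩
      apply (Stmt18.castHom_eq_zero_iff hpm _).1
      have h1 : (ZMod.unitsMap hpm b) ^ n = 1 := by
        rw [← hord p hp hpm]; exact pow_orderOf_eq_one _
      have h2 : ZMod.castHom hpm (ZMod p) ((b ^ n : (ZMod m)ˣ) : ZMod m)
          = ((ZMod.unitsMap hpm (b ^ n) : (ZMod p)ˣ) : ZMod p) := rfl
      rw [map_sub, map_one, h2, map_pow, h1, Units.val_one, sub_self]
    have hmd : m ∣ (((b ^ n : (ZMod m)ˣ) : ZMod m) - 1).val := by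
      refine (dvd_of_eq hm).trans ?_
      exact Finset.prod_primes_dvd _ (fun p hp => (hP' p hp).prime) (fun p hp => key p hp)
    have h3 : (((b ^ n : (ZMod m)ˣ) : ZMod m) - 1) = 0 := by
      have h4 := (ZMod.natCast_eq_zero_iff _ m).2 hmd
      rwa [ZMod.natCast_rightInverse] at h4
    refine Units.ext ?_
    rw [Units.val_one]
    linear_combination h3
  have hunit : ∀ s : ℕ, ¬ n ∣ s → IsUnit ((1 : ZMod m) - (b : ZMod m) ^ s) := by
    intro s hns
    have hx : ((1 : ZMod m) - (b : ZMod m) ^ s)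
        = ((((1 : ZMod m) - (b : ZMod m) ^ s).val : ℕ) : ZMod m) :=
      (ZMod.natCast_rightInverse _).symm
    rw [hx]
    apply (ZMod.isUnit_iff_coprime _ m).2
    by_contra hnc
    obtain ⟨p, pp, hp1, hp2⟩ := Nat.Prime.not_coprime_iff_dvd.1 hnc
    have hpP := hPmem p pp hp2
    have hpm : p ∣ m := hp2
    haveI : NeZero p := ⟨pp.ne_zero⟩
    have h0 : ZMod.castHom hpm (ZMod p) ((1 : ZMod m) - (b : ZMod m) ^ s) = 0 :=
      (Stmt18.castHom_eq_zero_iff hpm _).2 hp1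
    rw [map_sub, map_one, map_pow] at h0
    have h1 : (ZMod.castHom hpm (ZMod p) ((b : ZMod m))) ^ s = 1 := by
      linear_combination -h0
    have h2 : (ZMod.unitsMap hpm b) ^ s = 1 := by
      refine Units.ext ?_
      rw [Units.val_pow_eq_pow_val, Units.val_one]
      exact h1
    exact hns (hord p hpP hpm ▸ orderOf_dvd_of_pow_eq_one h2)
  rw [Stmt18.count_subSD b hb hunit]
  have hτm : m.divisors.card = 2 ^ g := by
    rw [hm, Stmt18.tau_prod P hP', hg]
  have hτn : n.divisors.card = 2 ^ h := by
    rw [hn, Stmt18.tau_prod Q hQ, hh]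
  rw [hτm, hτn]
end
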